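/- Let C be a finite non-degenerate projective configuration with lines l₀,…,lₙ, H = ℤⁿ with basis x₁,…,xₙ, and R₂ ⊆ Λ²H the subgroup spanned by the elements xᵢ ∧ s_p for (i,p) ∈ 𝒜, where s_p = Σ_{j : lⱼ incident to p} xⱼ. Then the annihilator R₂^⊥ of R₂ in Λ²H* = Hom(Λ²H, ℤ) is generated by the elements ω_{ijk} = xᵢ*∧xⱼ* + xⱼ*∧xₖ* + xₖ*∧xᵢ* for all triples of distinct indices 1 ≤ i,j,k ≤ n such that lᵢ, lⱼ, lₖ pass through a common point of 𝒫₀, together with the elements ω_{ij} = xᵢ*∧xⱼ* for all pairs 1 ≤ i < j ≤ n such that the common point of lᵢ and lⱼ lies on l₀; moreover the double annihilator satisfies (R₂^⊥)^⊥ = R₂, and consequently P₂ = Λ²H/R₂ is a free abelian group. -/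
import Mathlib


open scoped Classical

namespace Rybnikov11

/- A finite non-degenerate projective configuration with lines `l₀, …, lₙ`
(indexed by `Fin (n+1)`) and points of type `P`, incidence `inc`.
`H = ℤⁿ` with basis `x₁, …, xₙ` (here `xv i = Pi.single i 1`, `i : Fin n`,
corresponding to the line `l_{i.succ}`).  We use the standard model of `Λ²H`:
the free abelian group on the pairs `(i,j)` with `i < j`, with the wedge product
`(u ∧ v)(i,j) = uᵢvⱼ − uⱼvᵢ`; its dual `Hom(Λ²H, ℤ)` then models `Λ²H*`, and
`dualW i j` models `xᵢ* ∧ xⱼ*`. -/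

variable {n : ℕ} {P : Type*}

/-- The model of `Λ²H` for `H = ℤⁿ`: functions on `{(i,j) | i < j}`. -/
abbrev Lam (n : ℕ) := {q : Fin n × Fin n // q.1 < q.2} → ℤ

/-- The wedge product `H × H → Λ²H`. -/
def wedge (u v : Fin n → ℤ) : Lam n :=
  fun q => u q.val.1 * v q.val.2 - u q.val.2 * v q.val.1

/-- The basis vector `xᵢ` of `H = ℤⁿ`. -/
def xv (i : Fin n) : Fin n → ℤ := Pi.single i 1

/-- `s_p ∈ H`, the sum of the `x_j` over the lines `l_j` through `p` (`1 ≤ j ≤ n`). -/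
noncomputable def sv (inc : Fin (n + 1) → P → Prop) (p : P) : Fin n → ℤ :=
  fun k => if inc k.succ p then 1 else 0

/-- The subgroup `R₂ ⊆ Λ²H` spanned by the elements `xᵢ ∧ s_p` for `(i,p) ∈ 𝒜`. -/
noncomputable def R2 (inc : Fin (n + 1) → P → Prop) : AddSubgroup (Lam n) :=
  AddSubgroup.closure
    {y | ∃ (i : Fin n) (p : P), ¬ inc 0 p ∧ inc i.succ p ∧ y = wedge (xv i) (sv inc p)}

/-- `xᵢ* ∧ xⱼ* ∈ Λ²H* = Hom(Λ²H, ℤ)`. -/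
def dualW (i j : Fin n) : Lam n →+ ℤ :=
  AddMonoidHom.mk'
    (fun w => if h : i < j then w ⟨(i, j), h⟩ else if h' : j < i then -w ⟨(j, i), h'⟩ else 0)
    (by intro a b; split_ifs <;> simp [neg_add, add_comm])

/-- `ω_{ijk} = xᵢ*∧xⱼ* + xⱼ*∧xₖ* + xₖ*∧xᵢ*`. -/
def omega3 (i j k : Fin n) : Lam n →+ ℤ := dualW i j + dualW j k + dualW k i

/-- The annihilator `S^⊥ ⊆ Hom(Λ²H, ℤ)` of a subgroup `S ⊆ Λ²H`. -/
def ann (S : AddSubgroup (Lam n)) : AddSubgroup (Lam n →+ ℤ) where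
  carrier := {f | ∀ w ∈ S, f w = 0}
  add_mem' := by intro f g hf hg w hw; simp [hf w hw, hg w hw]
  zero_mem' := by intro w hw; rfl
  neg_mem' := by intro f hf w hw; simp [hf w hw]

/-- The annihilator `T^⊥ ⊆ Λ²H` of a subgroup `T ⊆ Hom(Λ²H, ℤ)`. -/
def coann (T : AddSubgroup (Lam n →+ ℤ)) : AddSubgroup (Lam n) where
  carrier := {w | ∀ f ∈ T, f w = 0}
  add_mem' := by intro u v hu hv f hf; simp [hu f hf, hv f hf]
  zero_mem' := by intro f hf; simp
  neg_mem' := by intro u hu f hf; simp [hu f hf]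

/-- The generating set of `R₂^⊥`: the forms `ω_{ijk}` for triples of distinct indices
with `lᵢ, lⱼ, lₖ` through a common point of `𝒫₀`, and the forms `ω_{ij} = xᵢ*∧xⱼ*`
for `i < j` with the common point of `lᵢ` and `lⱼ` on `l₀`. -/
def OmegaSet (inc : Fin (n + 1) → P → Prop) : Set (Lam n →+ ℤ) :=
  {f | ∃ (i j k : Fin n) (p : P), i ≠ j ∧ i ≠ k ∧ j ≠ k ∧ ¬ inc 0 p ∧
      inc i.succ p ∧ inc j.succ p ∧ inc k.succ p ∧ f = omega3 i j k} ∪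
  {f | ∃ (i j : Fin n) (p : P), i < j ∧ inc 0 p ∧
      inc i.succ p ∧ inc j.succ p ∧ f = dualW i j}

-- ===== auxiliary lemmas =====

lemma eval_eq (f : Lam n →+ ℤ) (w : Lam n) :
    f w = ∑ q : {q : Fin n × Fin n // q.1 < q.2}, w q * f (Pi.single q 1) := by
  conv_lhs => rw [← Finset.univ_sum_single w]
  rw [map_sum]
  refine Finset.sum_congr rfl fun q _ => ?_
  have : (Pi.single q (w q) : Lam n) = (w q) • (Pi.single q 1 : Lam n) := by
    funext x
    by_cases h : x = q <;> simp [Pi.single_apply, h]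
  rw [this, map_zsmul, smul_eq_mul]

lemma hom_ext {f g : Lam n →+ ℤ}
    (h : ∀ q : {q : Fin n × Fin n // q.1 < q.2}, f (Pi.single q 1) = g (Pi.single q 1)) :
    f = g := by
  refine AddMonoidHom.ext fun w => ?_
  rw [eval_eq f w, eval_eq g w]
  exact Finset.sum_congr rfl fun q _ => by rw [h q]

lemma dualW_apply' (i j : Fin n) (w : Lam n) :
    dualW i j w = if h : i < j then w ⟨(i, j), h⟩ else if h' : j < i then -w ⟨(j, i), h'⟩ else 0 :=
  rfl

lemma dualW_wedge (i j : Fin n) (u v : Fin n → ℤ) :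
    dualW i j (wedge u v) = u i * v j - u j * v i := by
  rw [dualW_apply']
  split_ifs with h h'
  · rfl
  · show -(u j * v i - u i * v j) = _
    ring
  · have : i = j := le_antisymm (not_lt.1 h') (not_lt.1 h)
    subst this; ring

lemma omega3_wedge (i j k : Fin n) (u v : Fin n → ℤ) :
    omega3 i j k (wedge u v) =
      (u i * v j - u j * v i) + (u j * v k - u k * v j) + (u k * v i - u i * v k) := by
  simp [omega3, dualW_wedge]

lemma dualW_single (i j a b : Fin n) (hab : ((a, b) : Fin n × Fin n).1 < (a, b).2) :
    dualW i j (Pi.single (⟨(a, b), hab⟩ : {q : Fin n × Fin n // q.1 < q.2}) 1) =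
      if i = a ∧ j = b then 1 else if i = b ∧ j = a then -1 else 0 := by
  rcases lt_trichotomy i j with h | rfl | h
  · rw [dualW_apply', dif_pos h]
    by_cases e : i = a ∧ j = b
    · obtain ⟨rfl, rfl⟩ := e
      rw [if_pos ⟨rfl, rfl⟩]; simp
    · have e2 : ¬(i = b ∧ j = a) := by
        rintro ⟨rfl, rfl⟩; exact absurd hab (asymm h)
      rw [if_neg e, if_neg e2]
      have hne : (⟨(i, j), h⟩ : {q : Fin n × Fin n // q.1 < q.2}) ≠ ⟨(a, b), hab⟩ := by
        simp only [ne_eq, Subtype.mk.injEq, Prod.mk.injEq]; tauto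
      simp [Pi.single_apply, hne]
  · rw [dualW_apply', dif_neg (lt_irrefl i), dif_neg (lt_irrefl i)]
    have e : ¬(i = a ∧ i = b) := by rintro ⟨rfl, rfl⟩; exact lt_irrefl _ hab
    rw [if_neg e, if_neg (by tauto : ¬(i = b ∧ i = a))]
  · rw [dualW_apply', dif_neg (asymm h), dif_pos h]
    by_cases e : i = b ∧ j = a
    · obtain ⟨rfl, rfl⟩ := e
      rw [if_neg (by rintro ⟨h1, -⟩; rw [h1] at h; exact lt_irrefl _ h), if_pos ⟨rfl, rfl⟩]
      simp
    · have e1 : ¬(i = a ∧ j = b) := by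
        rintro ⟨rfl, rfl⟩; exact absurd hab (asymm h)
      rw [if_neg e1, if_neg e]
      have hne : (⟨(j, i), h⟩ : {q : Fin n × Fin n // q.1 < q.2}) ≠ ⟨(a, b), hab⟩ := by
        simp only [ne_eq, Subtype.mk.injEq, Prod.mk.injEq]; tauto
      simp [Pi.single_apply, hne]

lemma dualW_single_zero (i j a b : Fin n) (hab : ((a, b) : Fin n × Fin n).1 < (a, b).2)
    (h1 : ¬(i = a ∧ j = b)) (h2 : ¬(i = b ∧ j = a)) :
    dualW i j (Pi.single (⟨(a, b), hab⟩ : {q : Fin n × Fin n // q.1 < q.2}) 1) = 0 := by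
  rw [dualW_single]; simp [h1, h2]

lemma dualW_neg_swap (i j : Fin n) (w : Lam n) : dualW j i w = - dualW i j w := by
  rw [dualW_apply', dualW_apply']
  rcases lt_trichotomy i j with h | h | h
  · rw [dif_neg (asymm h), dif_pos h, dif_pos h]
  · subst h; simp
  · rw [dif_pos h, dif_neg (asymm h), dif_pos h, neg_neg]

section
variable {inc : Fin (n + 1) → P → Prop}

lemma uniq_pt (unique_meet : ∀ i j : Fin (n + 1), i ≠ j → ∃! p : P, inc i p ∧ inc j p)
    {i j : Fin n} (hij : i ≠ j) {p1 p2 : P}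
    (h1 : inc i.succ p1) (h2 : inc j.succ p1) (h3 : inc i.succ p2) (h4 : inc j.succ p2) :
    p1 = p2 := by
  obtain ⟨p, -, hu⟩ := unique_meet i.succ j.succ (fun h => hij (Fin.succ_injective _ h))
  rw [hu p1 ⟨h1, h2⟩, hu p2 ⟨h3, h4⟩]

lemma omega_mem_ann (unique_meet : ∀ i j : Fin (n + 1), i ≠ j → ∃! p : P, inc i p ∧ inc j p)
    {f : Lam n →+ ℤ} (hf : f ∈ OmegaSet inc) : f ∈ ann (R2 inc) := by
  have hker : R2 inc ≤ f.ker := by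
    refine (AddSubgroup.closure_le _).2 ?_
    rintro y ⟨a, q, hq0, haq, rfl⟩
    show f (wedge (xv a) (sv inc q)) = 0
    rcases hf with ⟨i, j, k, p, hij, hik, hjk, hp0, hip, hjp, hkp, rfl⟩ |
      ⟨i, j, p, hij, hp0, hip, hjp, rfl⟩
    · rw [omega3_wedge]
      by_cases hqp : q = p
      · subst hqp
        simp only [sv, if_pos hip, if_pos hjp, if_pos hkp]
        ring
      · by_cases hai : a = i
        · subst hai
          have hj : ¬ inc j.succ q := fun h => hqp (uniq_pt unique_meet hij haq h hip hjp)
          have hk : ¬ inc k.succ q := fun h => hqp (uniq_pt unique_meet hik haq h hip hkp)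
          simp [xv, Pi.single_apply, sv, hj, hk, Ne.symm hij, Ne.symm hik]
        · by_cases haj : a = j
          · subst haj
            have hi : ¬ inc i.succ q := fun h => hqp (uniq_pt unique_meet hij h haq hip hjp)
            have hk : ¬ inc k.succ q := fun h => hqp (uniq_pt unique_meet hjk haq h hjp hkp)
            simp [xv, Pi.single_apply, sv, hi, hk, hij, Ne.symm hjk]
          · by_cases hak : a = k
            · subst hak
              have hi : ¬ inc i.succ q := fun h => hqp (uniq_pt unique_meet hik h haq hip hkp)
              have hj : ¬ inc j.succ q := fun h => hqp (uniq_pt unique_meet hjk h haq hjp hkp)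
              simp [xv, Pi.single_apply, sv, hi, hj, hik, hjk]
            · simp [xv, Pi.single_apply, hai, haj, hak]
    · rw [dualW_wedge]
      have hqp : q ≠ p := fun h => hq0 (h ▸ hp0)
      by_cases hai : a = i
      · subst hai
        have hj : ¬ inc j.succ q := fun h =>
          hqp (uniq_pt unique_meet (ne_of_lt hij) haq h hip hjp)
        simp [xv, Pi.single_apply, sv, hj, (ne_of_lt hij).symm]
      · by_cases haj : a = j
        · subst haj
          have hi : ¬ inc i.succ q := fun h =>
            hqp (uniq_pt unique_meet (ne_of_lt hij) h haq hip hjp)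
          simp [xv, Pi.single_apply, sv, hi, ne_of_lt hij]
        · simp [xv, Pi.single_apply, hai, haj]
  intro w hw
  exact hker hw

lemma mem_R2_of_killed [Fintype P]
    (unique_meet : ∀ i j : Fin (n + 1), i ≠ j → ∃! p : P, inc i p ∧ inc j p)
    (point_on_two : ∀ p : P, ∃ i j : Fin (n + 1), i ≠ j ∧ inc i p ∧ inc j p)
    {w : Lam n} (hw : ∀ f ∈ OmegaSet inc, f w = 0) : w ∈ R2 inc := by
  have hb : ∀ p : P, ¬ inc 0 p → ∃ b : Fin n, inc b.succ p := by
    intro p hp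
    obtain ⟨i, j, hij, hi, hj⟩ := point_on_two p
    rcases eq_or_ne i 0 with rfl | hi0
    · exact absurd hi hp
    · exact ⟨i.pred hi0, by rwa [Fin.succ_pred]⟩
  set W : Lam n := ∑ p : P, ∑ i : Fin n,
      (if h : ¬ inc 0 p ∧ inc i.succ p then
        (dualW i ((hb p h.1).choose) w) • wedge (xv i) (sv inc p) else 0) with hW
  have hWmem : W ∈ R2 inc := by
    refine AddSubgroup.sum_mem _ fun p _ => AddSubgroup.sum_mem _ fun i _ => ?_
    by_cases h : ¬ inc 0 p ∧ inc i.succ p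
    · rw [dif_pos h]
      have hgen : wedge (xv i) (sv inc p) ∈ R2 inc := by
        unfold R2; exact AddSubgroup.subset_closure ⟨i, p, h.1, h.2, rfl⟩
      exact AddSubgroup.zsmul_mem _ hgen _
    · rw [dif_neg h]; exact AddSubgroup.zero_mem _
  suffices hwW : w = W by rw [hwW]; exact hWmem
  funext q
  obtain ⟨⟨j, k⟩, hjk⟩ := q
  have hjkne : j ≠ k := ne_of_lt hjk
  obtain ⟨p0, ⟨hjp0, hkp0⟩, -⟩ := unique_meet j.succ k.succ
    (fun h => hjkne (Fin.succ_injective _ h))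
  have hWq : W ⟨(j, k), hjk⟩ = ∑ p : P, ∑ i : Fin n,
      (if h : ¬ inc 0 p ∧ inc i.succ p then
        (dualW i ((hb p h.1).choose) w) * wedge (xv i) (sv inc p) ⟨(j, k), hjk⟩ else 0) := by
    rw [hW]
    rw [Finset.sum_apply]
    refine Finset.sum_congr rfl fun p _ => ?_
    rw [Finset.sum_apply]
    refine Finset.sum_congr rfl fun i _ => ?_
    by_cases h : ¬ inc 0 p ∧ inc i.succ p
    · rw [dif_pos h, dif_pos h, Pi.smul_apply, smul_eq_mul]
    · rw [dif_neg h, dif_neg h, Pi.zero_apply]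
  have hterm0 : ∀ (p : P) (i : Fin n), p ≠ p0 → (¬ inc 0 p ∧ inc i.succ p) →
      wedge (xv i) (sv inc p) ⟨(j, k), hjk⟩ = 0 := by
    intro p i hp h
    show xv i j * sv inc p k - xv i k * sv inc p j = 0
    have h1 : xv i j * sv inc p k = 0 := by
      by_cases e : j = i
      · subst e
        have : ¬ inc k.succ p := fun hk =>
          hp (uniq_pt unique_meet hjkne h.2 hk hjp0 hkp0)
        simp [sv, this]
      · simp [xv, Pi.single_apply, e]
    have h2 : xv i k * sv inc p j = 0 := by
      by_cases e : k = i
      · subst e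
        have : ¬ inc j.succ p := fun hj =>
          hp (uniq_pt unique_meet hjkne hj h.2 hjp0 hkp0)
        simp [sv, this]
      · simp [xv, Pi.single_apply, e]
    rw [h1, h2, sub_zero]
  by_cases hp00 : inc 0 p0
  · have hwq : w ⟨(j, k), hjk⟩ = 0 := by
      have := hw (dualW j k) (Or.inr ⟨j, k, p0, hjk, hp00, hjp0, hkp0, rfl⟩)
      rwa [dualW_apply', dif_pos hjk] at this
    rw [hwq, hWq]
    refine (Finset.sum_eq_zero fun p _ => Finset.sum_eq_zero fun i _ => ?_).symm
    by_cases h : ¬ inc 0 p ∧ inc i.succ p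
    · rw [dif_pos h]
      have hp : p ≠ p0 := fun e => h.1 (e ▸ hp00)
      rw [hterm0 p i hp h, mul_zero]
    · rw [dif_neg h]
  · set b := (hb p0 hp00).choose with hbdef
    have hbp0 : inc b.succ p0 := (hb p0 hp00).choose_spec
    have hWq2 : W ⟨(j, k), hjk⟩ = dualW j b w - dualW k b w := by
      rw [hWq]
      rw [Finset.sum_eq_single p0]
      · rw [Finset.sum_eq_add_of_mem j k (Finset.mem_univ _) (Finset.mem_univ _) hjkne]
        · have hj' : ¬ inc 0 p0 ∧ inc j.succ p0 := ⟨hp00, hjp0⟩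
          have hk' : ¬ inc 0 p0 ∧ inc k.succ p0 := ⟨hp00, hkp0⟩
          rw [dif_pos hj', dif_pos hk']
          have e1 : wedge (xv j) (sv inc p0) ⟨(j, k), hjk⟩ = 1 := by
            show xv j j * sv inc p0 k - xv j k * sv inc p0 j = 1
            simp [xv, Pi.single_apply, sv, hjkne.symm, hkp0, hjp0]
          have e2 : wedge (xv k) (sv inc p0) ⟨(j, k), hjk⟩ = -1 := by
            show xv k j * sv inc p0 k - xv k k * sv inc p0 j = -1
            simp [xv, Pi.single_apply, sv, hjkne, hkp0, hjp0]
          rw [e1, e2]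
          ring
        · intro i _ hi
          obtain ⟨hij, hik⟩ := hi
          by_cases h : ¬ inc 0 p0 ∧ inc i.succ p0
          · rw [dif_pos h]
            have : wedge (xv i) (sv inc p0) ⟨(j, k), hjk⟩ = 0 := by
              show xv i j * sv inc p0 k - xv i k * sv inc p0 j = 0
              simp [xv, Pi.single_apply, Ne.symm hij, Ne.symm hik]
            rw [this, mul_zero]
          · rw [dif_neg h]
      · intro p _ hp
        refine Finset.sum_eq_zero fun i _ => ?_
        by_cases h : ¬ inc 0 p ∧ inc i.succ p
        · rw [dif_pos h, hterm0 p i hp h, mul_zero]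
        · rw [dif_neg h]
      · intro h; exact absurd (Finset.mem_univ p0) h
    rw [hWq2]
    have hwq : w ⟨(j, k), hjk⟩ = dualW j k w := by rw [dualW_apply', dif_pos hjk]
    rw [hwq]
    rcases eq_or_ne b j with rfl | hbj
    · have h0 : dualW b b w = 0 := by rw [dualW_apply']; simp
      rw [h0]
      linarith [dualW_neg_swap b k w]
    · rcases eq_or_ne b k with rfl | hbk
      · have h0 : dualW b b w = 0 := by rw [dualW_apply']; simp
        rw [h0]
        ring
      · have h3 := hw (omega3 j k b)
          (Or.inl ⟨j, k, b, p0, hjkne, Ne.symm hbj, Ne.symm hbk, hp00, hjp0, hkp0, hbp0, rfl⟩)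
        have h4 : dualW j k w + dualW k b w + dualW b j w = 0 := by
          simpa [omega3] using h3
        have h5 : dualW b j w = - dualW j b w := dualW_neg_swap j b w
        linarith


lemma wedge_apply (u v : Fin n → ℤ) (a b : Fin n) (hab : ((a, b) : Fin n × Fin n).1 < (a, b).2) :
    wedge u v ⟨(a, b), hab⟩ = u a * v b - u b * v a := rfl

lemma ann_le_closure [Fintype P]
    (unique_meet : ∀ i j : Fin (n + 1), i ≠ j → ∃! p : P, inc i p ∧ inc j p)
    (point_on_two : ∀ p : P, ∃ i j : Fin (n + 1), i ≠ j ∧ inc i p ∧ inc j p)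
    (nondeg : ∃ p q : P, p ≠ q) :
    ann (R2 inc) ≤ AddSubgroup.closure (OmegaSet inc) := by
  intro f hf
  have hfgen : ∀ (i : Fin n) (p : P), ¬ inc 0 p → inc i.succ p →
      f (wedge (xv i) (sv inc p)) = 0 := by
    intro i p h1 h2
    refine hf _ ?_
    unfold R2
    exact AddSubgroup.subset_closure ⟨i, p, h1, h2, rfl⟩
  have hn : 0 < n := by
    obtain ⟨p1, p2, -⟩ := nondeg
    obtain ⟨i, j, hij, -, -⟩ := point_on_two p1
    rcases eq_or_ne i 0 with rfl | h0
    · exact (j.pred (Ne.symm hij)).pos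
    · exact (i.pred h0).pos
  have hb : ∀ p : P, ¬ inc 0 p → ∃ b : Fin n, inc b.succ p := by
    intro p hp
    obtain ⟨i, j, hij, hi, hj⟩ := point_on_two p
    rcases eq_or_ne i 0 with rfl | hi0
    · exact absurd hi hp
    · exact ⟨i.pred hi0, by rwa [Fin.succ_pred]⟩
  set pivot : P → Fin n := fun p => if h : ¬ inc 0 p then (hb p h).choose else ⟨0, hn⟩
    with hpivdef
  have hpivot : ∀ p, ¬ inc 0 p → inc (pivot p).succ p := by
    intro p h
    simp only [hpivdef]
    rw [dif_pos h]
    exact (hb p h).choose_spec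
  have hmeet : ∀ q : {q : Fin n × Fin n // q.1 < q.2},
      ∃ p : P, inc q.1.1.succ p ∧ inc q.1.2.succ p := fun q =>
    (unique_meet q.1.1.succ q.1.2.succ
      (fun h => (ne_of_lt q.2) (Fin.succ_injective _ h))).exists
  set pt : {q : Fin n × Fin n // q.1 < q.2} → P := fun q => (hmeet q).choose with hptdef
  have hpt : ∀ q, inc q.1.1.succ (pt q) ∧ inc q.1.2.succ (pt q) := fun q => (hmeet q).choose_spec
  set g : {q : Fin n × Fin n // q.1 < q.2} → (Lam n →+ ℤ) := fun q =>
    if inc 0 (pt q) then dualW q.1.1 q.1.2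
    else if pivot (pt q) = q.1.1 ∨ pivot (pt q) = q.1.2 then 0
    else omega3 (pivot (pt q)) q.1.1 q.1.2 with hgdef
  have hgmem : ∀ q, g q ∈ AddSubgroup.closure (OmegaSet inc) := by
    intro q
    simp only [hgdef]
    split_ifs with h1 h2
    · exact AddSubgroup.subset_closure
        (Or.inr ⟨q.1.1, q.1.2, pt q, q.2, h1, (hpt q).1, (hpt q).2, rfl⟩)
    · exact zero_mem _
    · push_neg at h2
      exact AddSubgroup.subset_closure (Or.inl ⟨pivot (pt q), q.1.1, q.1.2, pt q, h2.1, h2.2,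
        ne_of_lt q.2, h1, hpivot _ h1, (hpt q).1, (hpt q).2, rfl⟩)
  suffices hfS : f = ∑ q, f (Pi.single q 1) • g q by
    rw [hfS]
    exact AddSubgroup.sum_mem _ fun q _ => AddSubgroup.zsmul_mem _ (hgmem q) _
  apply hom_ext
  intro q0
  rw [show (∑ q, f (Pi.single q 1) • g q) (Pi.single q0 1)
      = ∑ q, f (Pi.single q 1) * (g q) (Pi.single q0 1) from by
    simp [AddMonoidHom.finset_sum_apply]]
  obtain ⟨⟨j, k⟩, hjk⟩ := q0
  have hjkne : j ≠ k := ne_of_lt hjk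
  obtain ⟨p0, hp0def⟩ : ∃ p, pt ⟨(j, k), hjk⟩ = p := ⟨_, rfl⟩
  have hjp0 : inc j.succ p0 := hp0def ▸ (hpt ⟨(j, k), hjk⟩).1
  have hkp0 : inc k.succ p0 := hp0def ▸ (hpt ⟨(j, k), hjk⟩).2
  have hnotboth : ∀ p : P, p ≠ p0 → ¬ (inc j.succ p ∧ inc k.succ p) :=
    fun p hp hh => hp (uniq_pt unique_meet hjkne hh.1 hh.2 hjp0 hkp0)
  have hgz : ∀ (a a' : Fin n) (haa : ((a, a') : Fin n × Fin n).1 < (a, a').2),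
      pt ⟨(a, a'), haa⟩ ≠ p0 →
      (g ⟨(a, a'), haa⟩) (Pi.single (⟨(j, k), hjk⟩ : {q : Fin n × Fin n // q.1 < q.2}) 1) = 0 := by
    intro a a' haa hpq
    have hz : ∀ x y : Fin n, inc x.succ (pt ⟨(a, a'), haa⟩) → inc y.succ (pt ⟨(a, a'), haa⟩) →
        dualW x y (Pi.single (⟨(j, k), hjk⟩ : {q : Fin n × Fin n // q.1 < q.2}) 1) = 0 := by
      intro x y hx hy
      refine dualW_single_zero x y j k hjk ?_ ?_
      · rintro ⟨rfl, rfl⟩; exact hnotboth _ hpq ⟨hx, hy⟩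
      · rintro ⟨rfl, rfl⟩; exact hnotboth _ hpq ⟨hy, hx⟩
    simp only [hgdef]
    split_ifs with h1 h2
    · exact hz a a' (hpt ⟨(a, a'), haa⟩).1 (hpt ⟨(a, a'), haa⟩).2
    · simp
    · show (dualW (pivot (pt ⟨(a, a'), haa⟩)) a + dualW a a'
          + dualW a' (pivot (pt ⟨(a, a'), haa⟩))) _ = 0
      rw [AddMonoidHom.add_apply, AddMonoidHom.add_apply]
      rw [hz _ _ (hpivot _ h1) (hpt ⟨(a, a'), haa⟩).1,
        hz _ _ (hpt ⟨(a, a'), haa⟩).1 (hpt ⟨(a, a'), haa⟩).2,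
        hz _ _ (hpt ⟨(a, a'), haa⟩).2 (hpivot _ h1)]
      ring
  by_cases h00 : inc 0 p0
  · -- Case 1 : the pair (j,k) meets on l₀
    have hsum : ∑ q, f (Pi.single q 1) * (g q) (Pi.single ⟨(j, k), hjk⟩ 1)
        = f (Pi.single ⟨(j, k), hjk⟩ 1)
          * (g ⟨(j, k), hjk⟩) (Pi.single ⟨(j, k), hjk⟩ 1) := by
      refine Finset.sum_eq_single _ ?_ (fun h => absurd (Finset.mem_univ _) h)
      rintro ⟨⟨a, a'⟩, haa⟩ - hne
      by_cases hpq : pt ⟨(a, a'), haa⟩ = p0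
      · have : (g ⟨(a, a'), haa⟩) (Pi.single (⟨(j, k), hjk⟩ :
            {q : Fin n × Fin n // q.1 < q.2}) 1) = 0 := by
          simp only [hgdef]
          rw [hpq, if_pos h00]
          refine dualW_single_zero a a' j k hjk ?_ ?_
          · rintro ⟨rfl, rfl⟩; exact hne (Subtype.ext rfl)
          · rintro ⟨rfl, rfl⟩; exact absurd hjk (asymm haa)
        rw [this, mul_zero]
      · rw [hgz a a' haa hpq, mul_zero]
    rw [hsum]
    have : (g ⟨(j, k), hjk⟩) (Pi.single (⟨(j, k), hjk⟩ :
        {q : Fin n × Fin n // q.1 < q.2}) 1) = 1 := by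
      simp only [hgdef]
      rw [hp0def, if_pos h00, dualW_single, if_pos ⟨rfl, rfl⟩]
    rw [this, mul_one]
  · -- Case 2 : (j,k) meets at p0 ∈ 𝒫₀
    obtain ⟨b, hbdef2⟩ : ∃ x, pivot p0 = x := ⟨_, rfl⟩
    have hbp0 : inc b.succ p0 := hbdef2 ▸ hpivot p0 h00
    rcases eq_or_ne b j with hbj | hbj
    · -- Case 2a : pivot = j
      subst hbj
      have hbkne : b ≠ k := ne_of_lt hjk
      have hval : ∀ (a a' : Fin n) (haa : ((a, a') : Fin n × Fin n).1 < (a, a').2),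
          (g ⟨(a, a'), haa⟩) (Pi.single (⟨(b, k), hjk⟩ : {q : Fin n × Fin n // q.1 < q.2}) 1)
          = wedge (xv k) (sv inc p0) ⟨(a, a'), haa⟩
            + (if (⟨(a, a'), haa⟩ : {q : Fin n × Fin n // q.1 < q.2}) = ⟨(b, k), hjk⟩
              then 1 else 0) := by
        intro a a' haa
        rw [wedge_apply]
        by_cases hpq : pt ⟨(a, a'), haa⟩ = p0
        · have ha : inc a.succ p0 := hpq ▸ (hpt ⟨(a, a'), haa⟩).1
          have ha' : inc a'.succ p0 := hpq ▸ (hpt ⟨(a, a'), haa⟩).2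
          simp only [hgdef]
          rw [hpq, if_neg h00, hbdef2]
          by_cases e : b = a ∨ b = a'
          · rw [if_pos e, AddMonoidHom.zero_apply]
            rcases e with rfl | rfl
            · by_cases ea' : a' = k
              · rw [if_pos (Subtype.ext (show ((b, a') : Fin n × Fin n) = (b, k) by rw [ea']) :
                  (⟨(b, a'), haa⟩ : {q : Fin n × Fin n // q.1 < q.2}) = ⟨(b, k), hjk⟩)]
                simp [xv, Pi.single_apply, sv, hbkne, ea', ha', hbp0]
              · rw [if_neg (by simp [Subtype.mk.injEq, Prod.mk.injEq, ea'] :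
                  ¬ (⟨(b, a'), haa⟩ : {q : Fin n × Fin n // q.1 < q.2}) = ⟨(b, k), hjk⟩)]
                simp [xv, Pi.single_apply, sv, hbkne, ea']
            · have hak : a ≠ k := fun h => absurd hjk (asymm (h ▸ haa))
              rw [if_neg (by simp [hbkne] :
                  ¬ (⟨(a, b), haa⟩ : {q : Fin n × Fin n // q.1 < q.2}) = ⟨(b, k), hjk⟩)]
              simp [xv, Pi.single_apply, sv, hak, hbkne]
          · rw [if_neg e]
            push_neg at e
            obtain ⟨e1, e2⟩ := e
            show (dualW b a + dualW a a' + dualW a' b) _ = _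
            rw [AddMonoidHom.add_apply, AddMonoidHom.add_apply]
            have c1 : dualW b a (Pi.single (⟨(b, k), hjk⟩ :
                {q : Fin n × Fin n // q.1 < q.2}) 1) = if a = k then 1 else 0 := by
              rw [dualW_single]; simp [hbkne]
            have c2 : dualW a a' (Pi.single (⟨(b, k), hjk⟩ :
                {q : Fin n × Fin n // q.1 < q.2}) 1) = 0 := by
              refine dualW_single_zero a a' b k hjk ?_ ?_
              · rintro ⟨rfl, -⟩; exact e1 rfl
              · rintro ⟨-, rfl⟩; exact e2 rfl
            have c3 : dualW a' b (Pi.single (⟨(b, k), hjk⟩ :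
                {q : Fin n × Fin n // q.1 < q.2}) 1) = if a' = k then -1 else 0 := by
              rw [dualW_single]; simp [hbkne]
            rw [c1, c2, c3,
              if_neg (by simp only [ne_eq, Subtype.mk.injEq, Prod.mk.injEq]; tauto :
                ¬ (⟨(a, a'), haa⟩ : {q : Fin n × Fin n // q.1 < q.2}) = ⟨(b, k), hjk⟩)]
            simp only [xv, Pi.single_apply, sv, if_pos ha, if_pos ha']
            split_ifs <;> ring
        · rw [hgz a a' haa hpq]
          have hqne : ¬ (⟨(a, a'), haa⟩ : {q : Fin n × Fin n // q.1 < q.2})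
              = ⟨(b, k), hjk⟩ := by
            intro e
            rw [e] at hpq
            exact hpq hp0def
          rw [if_neg hqne]
          have w1 : xv k a * sv inc p0 a' = 0 := by
            by_cases ea : a = k
            · have : ¬ inc a'.succ p0 := fun h =>
                hpq (uniq_pt unique_meet (ne_of_lt haa) (hpt ⟨(a, a'), haa⟩).1 (hpt ⟨(a, a'), haa⟩).2 (ea ▸ hkp0) h)
              simp [sv, this]
            · simp [xv, Pi.single_apply, ea]
          have w2 : xv k a' * sv inc p0 a = 0 := by
            by_cases ea : a' = k
            · have : ¬ inc a.succ p0 := fun h =>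
                hpq (uniq_pt unique_meet (ne_of_lt haa) (hpt ⟨(a, a'), haa⟩).1 (hpt ⟨(a, a'), haa⟩).2 h (ea ▸ hkp0))
              simp [sv, this]
            · simp [xv, Pi.single_apply, ea]
          rw [w1, w2]
          ring
      have hsplit : ∑ q, f (Pi.single q 1) * (g q) (Pi.single ⟨(b, k), hjk⟩ 1)
          = f (wedge (xv k) (sv inc p0)) + f (Pi.single ⟨(b, k), hjk⟩ 1) := by
        have e1 : ∀ q : {q : Fin n × Fin n // q.1 < q.2},
            f (Pi.single q 1) * (g q) (Pi.single (⟨(b, k), hjk⟩ :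
              {q : Fin n × Fin n // q.1 < q.2}) 1)
            = wedge (xv k) (sv inc p0) q * f (Pi.single q 1)
              + (if q = ⟨(b, k), hjk⟩ then f (Pi.single q 1) else 0) := by
          rintro ⟨⟨a, a'⟩, haa⟩
          rw [hval a a' haa]
          by_cases e : (⟨(a, a'), haa⟩ : {q : Fin n × Fin n // q.1 < q.2}) = ⟨(b, k), hjk⟩
          · rw [if_pos e, if_pos e]; ring
          · rw [if_neg e, if_neg e]; ring
        rw [Finset.sum_congr rfl fun q _ => e1 q, Finset.sum_add_distrib, ← eval_eq]
        congr 1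
        rw [Finset.sum_ite_eq' Finset.univ (⟨(b, k), hjk⟩ : {q : Fin n × Fin n // q.1 < q.2})
          (fun q => f (Pi.single q 1))]
        exact if_pos (Finset.mem_univ _)
      rw [hsplit, hfgen k p0 h00 hkp0, zero_add]
    · rcases eq_or_ne b k with hbk | hbk
      · -- Case 2b : pivot = k
        subst hbk
        have hval : ∀ (a a' : Fin n) (haa : ((a, a') : Fin n × Fin n).1 < (a, a').2),
            (g ⟨(a, a'), haa⟩) (Pi.single (⟨(j, b), hjk⟩ : {q : Fin n × Fin n // q.1 < q.2}) 1)
            = -(wedge (xv j) (sv inc p0) ⟨(a, a'), haa⟩)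
              + (if (⟨(a, a'), haa⟩ : {q : Fin n × Fin n // q.1 < q.2}) = ⟨(j, b), hjk⟩
                then 1 else 0) := by
          intro a a' haa
          rw [wedge_apply]
          by_cases hpq : pt ⟨(a, a'), haa⟩ = p0
          · have ha : inc a.succ p0 := hpq ▸ (hpt ⟨(a, a'), haa⟩).1
            have ha' : inc a'.succ p0 := hpq ▸ (hpt ⟨(a, a'), haa⟩).2
            simp only [hgdef]
            rw [hpq, if_neg h00, hbdef2]
            by_cases e : b = a ∨ b = a'
            · rw [if_pos e, AddMonoidHom.zero_apply]
              rcases e with rfl | rfl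
              · have hbjne : b ≠ j := hbj
                have ha'j : a' ≠ j := fun h => absurd hjk (asymm (h ▸ haa))
                rw [if_neg (by simp [hbjne] :
                    ¬ (⟨(b, a'), haa⟩ : {q : Fin n × Fin n // q.1 < q.2}) = ⟨(j, b), hjk⟩)]
                simp [xv, Pi.single_apply, sv, hbjne, ha'j]
              · by_cases ea : a = j
                · rw [if_pos (Subtype.ext (show ((a, b) : Fin n × Fin n) = (j, b) by rw [ea]) :
                    (⟨(a, b), haa⟩ : {q : Fin n × Fin n // q.1 < q.2}) = ⟨(j, b), hjk⟩)]
                  simp [xv, Pi.single_apply, sv, ea, hbj, hbp0, hjp0]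
                · rw [if_neg (by simp [Subtype.mk.injEq, Prod.mk.injEq, ea] :
                    ¬ (⟨(a, b), haa⟩ : {q : Fin n × Fin n // q.1 < q.2}) = ⟨(j, b), hjk⟩)]
                  simp [xv, Pi.single_apply, sv, ea, hbj]
            · rw [if_neg e]
              push_neg at e
              obtain ⟨e1, e2⟩ := e
              show (dualW b a + dualW a a' + dualW a' b) _ = _
              rw [AddMonoidHom.add_apply, AddMonoidHom.add_apply]
              have c1 : dualW b a (Pi.single (⟨(j, b), hjk⟩ :
                  {q : Fin n × Fin n // q.1 < q.2}) 1) = if a = j then -1 else 0 := by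
                rw [dualW_single]; simp [hbj]
              have c2 : dualW a a' (Pi.single (⟨(j, b), hjk⟩ :
                  {q : Fin n × Fin n // q.1 < q.2}) 1) = 0 := by
                refine dualW_single_zero a a' j b hjk ?_ ?_
                · rintro ⟨-, rfl⟩; exact e2 rfl
                · rintro ⟨rfl, -⟩; exact e1 rfl
              have c3 : dualW a' b (Pi.single (⟨(j, b), hjk⟩ :
                  {q : Fin n × Fin n // q.1 < q.2}) 1) = if a' = j then 1 else 0 := by
                rw [dualW_single]; simp [hbj]
              rw [c1, c2, c3,
                if_neg (by simp only [ne_eq, Subtype.mk.injEq, Prod.mk.injEq]; tauto :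
                  ¬ (⟨(a, a'), haa⟩ : {q : Fin n × Fin n // q.1 < q.2}) = ⟨(j, b), hjk⟩)]
              simp only [xv, Pi.single_apply, sv, if_pos ha, if_pos ha']
              split_ifs <;> ring
          · rw [hgz a a' haa hpq]
            have hqne : ¬ (⟨(a, a'), haa⟩ : {q : Fin n × Fin n // q.1 < q.2})
                = ⟨(j, b), hjk⟩ := by
              intro e
              rw [e] at hpq
              exact hpq hp0def
            rw [if_neg hqne]
            have w1 : xv j a * sv inc p0 a' = 0 := by
              by_cases ea : a = j
              · have : ¬ inc a'.succ p0 := fun h =>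
                  hpq (uniq_pt unique_meet (ne_of_lt haa) (hpt ⟨(a, a'), haa⟩).1 (hpt ⟨(a, a'), haa⟩).2 (ea ▸ hjp0) h)
                simp [sv, this]
              · simp [xv, Pi.single_apply, ea]
            have w2 : xv j a' * sv inc p0 a = 0 := by
              by_cases ea : a' = j
              · have : ¬ inc a.succ p0 := fun h =>
                  hpq (uniq_pt unique_meet (ne_of_lt haa) (hpt ⟨(a, a'), haa⟩).1 (hpt ⟨(a, a'), haa⟩).2 h (ea ▸ hjp0))
                simp [sv, this]
              · simp [xv, Pi.single_apply, ea]
            rw [w1, w2]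
            ring
        have hsplit : ∑ q, f (Pi.single q 1) * (g q) (Pi.single ⟨(j, b), hjk⟩ 1)
            = -(f (wedge (xv j) (sv inc p0))) + f (Pi.single ⟨(j, b), hjk⟩ 1) := by
          have e1 : ∀ q : {q : Fin n × Fin n // q.1 < q.2},
              f (Pi.single q 1) * (g q) (Pi.single (⟨(j, b), hjk⟩ :
                {q : Fin n × Fin n // q.1 < q.2}) 1)
              = -(wedge (xv j) (sv inc p0) q * f (Pi.single q 1))
                + (if q = ⟨(j, b), hjk⟩ then f (Pi.single q 1) else 0) := by
            rintro ⟨⟨a, a'⟩, haa⟩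
            rw [hval a a' haa]
            by_cases e : (⟨(a, a'), haa⟩ : {q : Fin n × Fin n // q.1 < q.2}) = ⟨(j, b), hjk⟩
            · rw [if_pos e, if_pos e]; ring
            · rw [if_neg e, if_neg e]; ring
          rw [Finset.sum_congr rfl fun q _ => e1 q, Finset.sum_add_distrib]
          congr 1
          · rw [Finset.sum_neg_distrib, ← eval_eq]
          · rw [Finset.sum_ite_eq' Finset.univ (⟨(j, b), hjk⟩ :
              {q : Fin n × Fin n // q.1 < q.2}) (fun q => f (Pi.single q 1))]
            exact if_pos (Finset.mem_univ _)
        rw [hsplit, hfgen j p0 h00 hjp0, neg_zero, zero_add]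
      · -- Case 2c : pivot ∉ {j, k}
        have hval : ∀ (a a' : Fin n) (haa : ((a, a') : Fin n × Fin n).1 < (a, a').2),
            (g ⟨(a, a'), haa⟩) (Pi.single (⟨(j, k), hjk⟩ : {q : Fin n × Fin n // q.1 < q.2}) 1)
            = (if (⟨(a, a'), haa⟩ : {q : Fin n × Fin n // q.1 < q.2}) = ⟨(j, k), hjk⟩
                then 1 else 0) := by
          intro a a' haa
          by_cases hpq : pt ⟨(a, a'), haa⟩ = p0
          · simp only [hgdef]
            rw [hpq, if_neg h00, hbdef2]
            by_cases e : b = a ∨ b = a'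
            · rw [if_pos e]
              have hne : ¬ (⟨(a, a'), haa⟩ : {q : Fin n × Fin n // q.1 < q.2})
                  = ⟨(j, k), hjk⟩ := by
                intro h
                rw [Subtype.mk.injEq, Prod.mk.injEq] at h
                rcases e with rfl | rfl
                · exact hbj h.1
                · exact hbk h.2
              rw [if_neg hne]
              rfl
            · rw [if_neg e]
              push_neg at e
              obtain ⟨e1, e2⟩ := e
              show (dualW b a + dualW a a' + dualW a' b) _ = _
              rw [AddMonoidHom.add_apply, AddMonoidHom.add_apply]
              have c1 : dualW b a (Pi.single (⟨(j, k), hjk⟩ :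
                  {q : Fin n × Fin n // q.1 < q.2}) 1) = 0 := by
                refine dualW_single_zero b a j k hjk ?_ ?_
                · rintro ⟨rfl, -⟩; exact hbj rfl
                · rintro ⟨rfl, -⟩; exact hbk rfl
              have c3 : dualW a' b (Pi.single (⟨(j, k), hjk⟩ :
                  {q : Fin n × Fin n // q.1 < q.2}) 1) = 0 := by
                refine dualW_single_zero a' b j k hjk ?_ ?_
                · rintro ⟨-, rfl⟩; exact hbk rfl
                · rintro ⟨-, rfl⟩; exact hbj rfl
              have c2 : dualW a a' (Pi.single (⟨(j, k), hjk⟩ :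
                  {q : Fin n × Fin n // q.1 < q.2}) 1)
                  = if a = j ∧ a' = k then 1 else 0 := by
                rw [dualW_single]
                have : ¬(a = k ∧ a' = j) := by
                  rintro ⟨rfl, rfl⟩; exact absurd hjk (asymm haa)
                simp [this]
              rw [c1, c2, c3]
              simp only [Subtype.mk.injEq, Prod.mk.injEq]
              split_ifs <;> ring
          · rw [hgz a a' haa hpq]
            have hqne : ¬ (⟨(a, a'), haa⟩ : {q : Fin n × Fin n // q.1 < q.2})
                = ⟨(j, k), hjk⟩ := by
              intro e
              rw [e] at hpq
              exact hpq hp0def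
            rw [if_neg hqne]
        have hval' : ∀ q : {q : Fin n × Fin n // q.1 < q.2},
            (g q) (Pi.single (⟨(j, k), hjk⟩ : {q : Fin n × Fin n // q.1 < q.2}) 1)
            = if q = ⟨(j, k), hjk⟩ then 1 else 0 := by
          rintro ⟨⟨a, a'⟩, haa⟩
          exact hval a a' haa
        have hsum : ∑ q, f (Pi.single q 1) * (g q) (Pi.single ⟨(j, k), hjk⟩ 1)
            = f (Pi.single ⟨(j, k), hjk⟩ 1)
              * (g ⟨(j, k), hjk⟩) (Pi.single ⟨(j, k), hjk⟩ 1) := by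
          refine Finset.sum_eq_single _ ?_ (fun h => absurd (Finset.mem_univ _) h)
          intro q _ hne
          rw [hval' q, if_neg hne, mul_zero]
        rw [hsum, hval' _, if_pos rfl, mul_one]

end

/-- For a finite non-degenerate projective configuration: `R₂^⊥` is generated by the
forms `ω_{ijk}` and `ω_{ij}`, the double annihilator satisfies `(R₂^⊥)^⊥ = R₂`, and
consequently `P₂ = Λ²H/R₂` is a free abelian group. -/
theorem annihilator_R2_description
    [Fintype P] (inc : Fin (n + 1) → P → Prop)
    (unique_meet : ∀ i j : Fin (n + 1), i ≠ j → ∃! p : P, inc i p ∧ inc j p)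
    (point_on_two : ∀ p : P, ∃ i j : Fin (n + 1), i ≠ j ∧ inc i p ∧ inc j p)
    (nondeg : ∃ p q : P, p ≠ q) :
    ann (R2 inc) = AddSubgroup.closure (OmegaSet inc) ∧
    coann (ann (R2 inc)) = R2 inc ∧
    Module.Free ℤ (Lam n ⧸ R2 inc) := by
  constructor
  · apply le_antisymm
    · exact ann_le_closure unique_meet point_on_two nondeg
    · exact (AddSubgroup.closure_le _).2 fun f hf => omega_mem_ann unique_meet hf
  have key : ∀ w : Lam n, (∀ f ∈ ann (R2 inc), f w = 0) → w ∈ R2 inc := by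
    intro w hw
    exact mem_R2_of_killed unique_meet point_on_two
      (fun f hf => hw f (omega_mem_ann unique_meet hf))
  constructor
  · apply le_antisymm
    · intro w hw
      exact key w hw
    · intro w hw f hf
      exact hf w hw
  · -- freeness of the quotient
    have hsat : ∀ (c : ℤ) (w : Lam n), c ≠ 0 → c • w ∈ R2 inc → w ∈ R2 inc := by
      intro c w hc hcw
      refine key w fun f hf => ?_
      have h1 : f (c • w) = 0 := hf _ hcw
      rw [map_zsmul, smul_eq_mul] at h1
      exact (mul_eq_zero.1 h1).resolve_left hc
    haveI : Module.Finite ℤ (Lam n ⧸ R2 inc) :=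
      Module.Finite.of_surjective (QuotientAddGroup.mk' (R2 inc)).toIntLinearMap
        (QuotientAddGroup.mk'_surjective _)
    haveI : NoZeroSMulDivisors ℤ (Lam n ⧸ R2 inc) := by
      refine ⟨fun {c x} h => ?_⟩
      rcases eq_or_ne c 0 with rfl | hc
      · exact Or.inl rfl
      right
      obtain ⟨w, rfl⟩ := QuotientAddGroup.mk'_surjective (R2 inc) x
      rw [← map_zsmul] at h
      have hcw : c • w ∈ R2 inc := (QuotientAddGroup.eq_zero_iff _).1 h
      exact (QuotientAddGroup.eq_zero_iff _).2 (hsat c w hc hcw)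
    exact Module.free_of_finite_type_torsion_free'


end Rybnikov11
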